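/- Let d ≥ 2 be an integer. For every ε > 0 there exists a constant C = C(d, ε) > 0 such that the following holds: for every real X ≥ 1, every polynomial f ∈ ℤ[X] of degree d all of whose coefficients have absolute value at most X, and every integer H ≥ 1, the number of quadruples (x, y, z, w) of integers with 1 ≤ x, y, z, w ≤ H and f(x) + f(y) = f(z) + f(w) is at most C · H² · (HX)^ε. -/

import Mathlib

/-!
Write `r(M)` for the number of pairs `(x, z) ∈ [1, H]²` with `f x - f z = M` (`diffReps`).
Pairing `(x, z)` with `(w, y)` bounds the number of solutions by `∑ r(M)²`, while `∑ r(M) = H²`.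
Each `z` leaves at most `d` roots `x` of `f X = f z`, so `r(0) ≤ dH`. For `M ≠ 0` the difference
`a = x - z` divides `M`, and for each such `a` the point `z` is a root of `f(X + a) - f(X) - M`,
a nonzero polynomial of degree at most `d`: its `X^(d-1)`-coefficient is `d·a·lc(f) ≠ 0`, and
`d - 1 ≥ 1` keeps `M` out of it. Hence `r(M) ≤ 2d·τ(|M|)`, and since `|M| ≤ 2(d+1)(HX)^d`, the
divisor bound `τ(n) ≪_δ n^δ` with `δ = ε/d` gives `r(M) ≪ (HX)^ε` and
`∑_{M ≠ 0} r(M)² ≤ max r · H² ≪ H²(HX)^ε`.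
-/

open Finset Polynomial

lemma add_one_le_mul_one_add_pow {t : ℝ} (ht : 0 < t) (a : ℕ) :
    (a + 1 : ℝ) ≤ (1 + t⁻¹) * (1 + t) ^ a :=
  calc (a + 1 : ℝ) ≤ (1 + t⁻¹) * (1 + a * t) := by
        have : t⁻¹ * t = 1 := inv_mul_cancel₀ ht.ne'
        nlinarith [inv_pos.mpr ht]
    _ ≤ (1 + t⁻¹) * (1 + t) ^ a := by
        gcongr
        exact one_add_mul_le_pow (by linarith) a

lemma add_one_le_pow_of_two_le {y : ℝ} (hy : 2 ≤ y) (a : ℕ) : (a + 1 : ℝ) ≤ y ^ a :=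
  calc (a + 1 : ℝ) ≤ 2 ^ a := by exact_mod_cast Nat.lt_two_pow_self
    _ ≤ y ^ a := pow_le_pow_left₀ zero_le_two hy a

theorem Nat.exists_card_divisors_le_rpow {δ : ℝ} (hδ : 0 < δ) :
    ∃ C : ℝ, 0 < C ∧ ∀ n : ℕ, n ≠ 0 → (#n.divisors : ℝ) ≤ C * (n : ℝ) ^ δ := by
  set t : ℝ := 2 ^ δ - 1
  have ht : 0 < t := sub_pos.mpr (Real.one_lt_rpow one_lt_two hδ)
  set C₀ : ℝ := 1 + t⁻¹
  have hC₀ : 1 ≤ C₀ := le_add_of_nonneg_right (inv_nonneg.mpr ht.le)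
  set N := ⌈(2 : ℝ) ^ δ⁻¹⌉₊
  -- The prime power `p^a` contributes `(a + 1) / p^(aδ)`: at most `C₀`, and at most `1` if `p ≥ N`.
  set c : ℕ → ℝ := fun p => if p < N then C₀ else 1
  refine ⟨C₀ ^ N, by positivity, fun n hn => ?_⟩
  have hfactor : ∀ p ∈ n.primeFactors,
      ((n.factorization p + 1 : ℕ) : ℝ) ≤ c p * ((p : ℝ) ^ δ) ^ n.factorization p := by
    intro p hp
    have hp2 : (2 : ℝ) ≤ p := by exact_mod_cast (Nat.prime_of_mem_primeFactors hp).two_le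
    push_cast
    by_cases hpN : p < N
    · simp only [c, if_pos hpN]
      calc _ ≤ C₀ * (1 + t) ^ n.factorization p := add_one_le_mul_one_add_pow ht _
        _ ≤ _ := by
          gcongr
          simpa [t] using Real.rpow_le_rpow zero_le_two hp2 hδ.le
    · simp only [c, if_neg hpN, one_mul]
      refine add_one_le_pow_of_two_le ?_ _
      have : (2 : ℝ) ^ δ⁻¹ ≤ p := (Nat.le_ceil _).trans (by exact_mod_cast not_lt.mp hpN)
      exact (Real.rpow_inv_le_iff_of_pos zero_le_two (by positivity) hδ).mp this
  have hprod_c : ∏ p ∈ n.primeFactors, c p ≤ C₀ ^ N :=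
    calc ∏ p ∈ n.primeFactors, c p = C₀ ^ #{p ∈ n.primeFactors | p < N} := by
          simp [c, prod_ite]
      _ ≤ C₀ ^ N := pow_le_pow_right₀ hC₀ <|
          (card_le_card fun p hp => mem_range.mpr (mem_filter.mp hp).2).trans (card_range N).le
  have hn_prod : (n : ℝ) = ∏ p ∈ n.primeFactors, (p : ℝ) ^ n.factorization p := by
    conv_lhs => rw [← Nat.prod_factorization_pow_eq_self hn]
    rw [Nat.prod_factorization_eq_prod_primeFactors]
    push_cast
    rfl
  calc (#n.divisors : ℝ) = ∏ p ∈ n.primeFactors, ((n.factorization p + 1 : ℕ) : ℝ) := by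
        rw [Nat.card_divisors hn]
        push_cast
        rfl
    _ ≤ ∏ p ∈ n.primeFactors, c p * ((p : ℝ) ^ δ) ^ n.factorization p :=
        prod_le_prod (fun _ _ => by positivity) hfactor
    _ = (∏ p ∈ n.primeFactors, c p) * (n : ℝ) ^ δ := by
        rw [prod_mul_distrib, hn_prod, ← Real.finsetProd_rpow _ _ (fun _ _ => by positivity)]
        simp_rw [Real.rpow_pow_comm (Nat.cast_nonneg _)]
    _ ≤ C₀ ^ N * (n : ℝ) ^ δ := by gcongr

theorem Int.card_divisors (z : ℤ) : #z.divisors = 2 * #z.natAbs.divisors := by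
  rw [Int.divisors, card_disjUnion, card_map, card_map, two_mul]

namespace Polynomial

theorem coeff_taylor_natDegree_sub_one {R : Type*} [CommSemiring R] (f : R[X]) (r : R) :
    (taylor r f).coeff (f.natDegree - 1) =
      f.coeff (f.natDegree - 1) + f.natDegree * f.leadingCoeff * r := by
  rw [taylor_coeff, eval_eq_sum_range' (n := 2)
    ((natDegree_hasseDeriv_le _ _).trans_lt (by omega)), leadingCoeff]
  cases h : f.natDegree with
  | zero => simp [sum_range_succ, coeff_eq_zero_of_natDegree_lt, h]
  | succ k => simp [sum_range_succ, hasseDeriv_coeff, add_comm 1 k]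

variable {R : Type*} [CommRing R]

theorem natDegree_taylor_sub_self_le (f : R[X]) (r : R) :
    (taylor r f - f).natDegree ≤ f.natDegree :=
  (natDegree_sub_le _ _).trans (by rw [natDegree_taylor, max_self])

variable [IsDomain R]

theorem card_filter_eval_eq_le [DecidableEq R] {p : R[X]} (hp : 0 < p.natDegree)
    (s : Finset R) (c : R) : #{x ∈ s | p.eval x = c} ≤ p.natDegree := by
  have hne : p - C c ≠ 0 := fun h => by
    rw [sub_eq_zero.mp h, natDegree_C] at hp
    exact hp.false
  calc #{x ∈ s | p.eval x = c} ≤ (p - C c).natDegree := by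
        refine card_le_degree_of_subset_roots fun x hx => ?_
        rw [mem_roots hne, IsRoot, eval_sub, eval_C, sub_eq_zero]
        exact (mem_filter.mp hx).2
    _ = p.natDegree := natDegree_sub_C

theorem natDegree_taylor_sub_self_pos [CharZero R] {f : R[X]} (hf : 2 ≤ f.natDegree) {r : R}
    (hr : r ≠ 0) : 0 < (taylor r f - f).natDegree := by
  have hf₀ : f ≠ 0 := by rintro rfl; simp at hf
  have hd : (f.natDegree : R) ≠ 0 := by exact_mod_cast (by omega : f.natDegree ≠ 0)
  have hcoeff : (taylor r f - f).coeff (f.natDegree - 1) ≠ 0 := by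
    rw [coeff_sub, coeff_taylor_natDegree_sub_one, add_sub_cancel_left]
    exact mul_ne_zero (mul_ne_zero hd (leadingCoeff_ne_zero.mpr hf₀)) hr
  exact lt_of_lt_of_le (by omega) (le_natDegree_of_ne_zero hcoeff)

end Polynomial

section Representations

variable {R : Type*} [CommRing R] [DecidableEq R]

def diffReps (f : R[X]) (s : Finset R) (M : R) : Finset (R × R) :=
  {p ∈ s ×ˢ s | f.eval p.1 - f.eval p.2 = M}

theorem card_diffReps_zero_le [IsDomain R] {f : R[X]} (hf : 0 < f.natDegree) (s : Finset R) :
    #(diffReps f s 0) ≤ f.natDegree * #s := by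
  refine card_le_mul_card_image_of_maps_to (f := Prod.snd)
    (fun p hp => (mem_product.mp (mem_filter.mp hp).1).2) _ fun z _ => ?_
  calc #{p ∈ diffReps f s 0 | p.2 = z} ≤ #{x ∈ s | f.eval x = f.eval z} := by
        refine card_le_card_of_injOn Prod.fst (fun p hp => ?_) fun p hp q hq h => ?_
        · simp only [diffReps, mem_coe, mem_filter, mem_product] at hp ⊢
          obtain ⟨⟨⟨hx, -⟩, hfp⟩, rfl⟩ := hp
          exact ⟨hx, sub_eq_zero.mp hfp⟩
        · simp only [mem_coe, mem_filter] at hp hq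
          exact Prod.ext h (hp.2.trans hq.2.symm)
    _ ≤ f.natDegree := card_filter_eval_eq_le hf s _

theorem card_diffReps_le_of_ne_zero {f : ℤ[X]} (hf : 2 ≤ f.natDegree) (s : Finset ℤ) {M : ℤ}
    (hM : M ≠ 0) :
    #(diffReps f s M) ≤ f.natDegree * (2 * #M.natAbs.divisors) := by
  rw [← Int.card_divisors]
  refine card_le_mul_card_image_of_maps_to (f := fun p => p.1 - p.2) (fun p hp => ?_) _
    fun a ha => ?_
  · exact Int.mem_divisors.mpr ⟨(mem_filter.mp hp).2 ▸ sub_dvd_eval_sub _ _ f, hM⟩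
  have ha₀ : a ≠ 0 := by rintro rfl; exact hM (zero_dvd_iff.mp (Int.dvd_of_mem_divisors ha))
  calc #{p ∈ diffReps f s M | p.1 - p.2 = a} ≤ #{z ∈ s | (taylor a f - f).eval z = M} := by
        refine card_le_card_of_injOn Prod.snd (fun p hp => ?_) fun p hp q hq h => ?_
        · simp only [diffReps, mem_coe, mem_filter, mem_product] at hp ⊢
          obtain ⟨⟨⟨-, hz⟩, hfp⟩, rfl⟩ := hp
          exact ⟨hz, by simpa [taylor_eval] using hfp⟩
        · simp only [mem_coe, mem_filter] at hp hq
          exact Prod.ext (by linarith [hp.2, hq.2]) h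
    _ ≤ (taylor a f - f).natDegree :=
        card_filter_eval_eq_le (natDegree_taylor_sub_self_pos hf ha₀) s M
    _ ≤ f.natDegree := natDegree_taylor_sub_self_le f a

theorem sum_card_diffReps (f : R[X]) (s : Finset R) :
    ∑ M ∈ (s ×ˢ s).image (fun p => f.eval p.1 - f.eval p.2), #(diffReps f s M) = #s ^ 2 := by
  rw [sq, ← card_product,
    card_eq_sum_card_fiberwise (f := fun p : R × R => f.eval p.1 - f.eval p.2)
      fun p hp => mem_image_of_mem _ hp]
  rfl

theorem card_eval_add_eq_le_sum_sq (f : R[X]) (s : Finset R) :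
    #{q ∈ s ×ˢ s ×ˢ s ×ˢ s | f.eval q.1 + f.eval q.2.1 = f.eval q.2.2.1 + f.eval q.2.2.2} ≤
      ∑ M ∈ (s ×ˢ s).image (fun p => f.eval p.1 - f.eval p.2), #(diffReps f s M) ^ 2 := by
  rw [card_eq_sum_card_fiberwise (f := fun q => f.eval q.1 - f.eval q.2.2.1) fun q hq => ?_]
  · refine sum_le_sum fun M _ => ?_
    rw [sq, ← card_product]
    refine card_le_card_of_injOn (fun q => ((q.1, q.2.2.1), (q.2.2.2, q.2.1)))
      (fun q hq => ?_) fun q _ q' _ h => ?_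
    · simp only [diffReps, mem_coe, mem_filter, mem_product] at hq ⊢
      obtain ⟨⟨⟨hx, hy, hz, hw⟩, heq⟩, rfl⟩ := hq
      exact ⟨⟨⟨hx, hz⟩, rfl⟩, ⟨hw, hy⟩, by linear_combination -heq⟩
    · simp only [Prod.mk.injEq] at h
      obtain ⟨⟨h1, h3⟩, h4, h2⟩ := h
      exact Prod.ext h1 (Prod.ext h2 (Prod.ext h3 h4))
  · simp only [mem_coe, mem_filter, mem_product] at hq
    exact mem_image.mpr ⟨(q.1, q.2.2.1), mem_product.mpr ⟨hq.1.1, hq.1.2.2.1⟩, rfl⟩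

theorem card_eval_add_eq_le [IsDomain R] {f : R[X]} (hf : 0 < f.natDegree) (s : Finset R)
    {K : ℝ} (hK₀ : 0 ≤ K)
    (hK : ∀ M ∈ (s ×ˢ s).image (fun p => f.eval p.1 - f.eval p.2), M ≠ 0 →
      (#(diffReps f s M) : ℝ) ≤ K) :
    (#{q ∈ s ×ˢ s ×ˢ s ×ˢ s | f.eval q.1 + f.eval q.2.1 = f.eval q.2.2.1 + f.eval q.2.2.2} : ℝ)
      ≤ (f.natDegree ^ 2 + K) * #s ^ 2 := by
  have hQ := card_eval_add_eq_le_sum_sq f s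
  have hsum := sum_card_diffReps f s
  have h₀ := card_diffReps_zero_le hf s
  set S := (s ×ˢ s).image (fun p => f.eval p.1 - f.eval p.2)
  set B : ℝ := ((f.natDegree : ℝ) * #s) ^ 2
  have hterm : ∀ M ∈ S, (#(diffReps f s M) : ℝ) ^ 2 ≤
      K * #(diffReps f s M) + if M = 0 then B else 0 := by
    intro M hM
    have hr : (0 : ℝ) ≤ #(diffReps f s M) := Nat.cast_nonneg _
    split_ifs with hM₀
    · subst hM₀
      have : (#(diffReps f s 0) : ℝ) ≤ f.natDegree * #s := by exact_mod_cast h₀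
      nlinarith
    · nlinarith [hK M hM hM₀]
  calc _ ≤ ∑ M ∈ S, (#(diffReps f s M) : ℝ) ^ 2 := by exact_mod_cast hQ
    _ ≤ ∑ M ∈ S, (K * #(diffReps f s M) + if M = 0 then B else 0) := sum_le_sum hterm
    _ = K * #s ^ 2 + if 0 ∈ S then B else 0 := by
        rw [sum_add_distrib, ← mul_sum, sum_ite_eq']
        congr 2
        exact_mod_cast hsum
    _ ≤ K * #s ^ 2 + B := by
        gcongr
        split_ifs
        exacts [le_rfl, by positivity]
    _ = (f.natDegree ^ 2 + K) * #s ^ 2 := by ring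

end Representations

theorem abs_eval_le_of_abs_coeff_le {f : ℤ[X]} {X T : ℝ} (hcoeff : ∀ i, |(f.coeff i : ℝ)| ≤ X)
    (hT : 1 ≤ T) {t : ℤ} (ht : |(t : ℝ)| ≤ T) :
    |((f.eval t : ℤ) : ℝ)| ≤ (f.natDegree + 1) * X * T ^ f.natDegree := by
  have hX : 0 ≤ X := (abs_nonneg _).trans (hcoeff 0)
  rw [eval_eq_sum_range, Int.cast_sum]
  calc _ ≤ ∑ i ∈ range (f.natDegree + 1), |((f.coeff i * t ^ i : ℤ) : ℝ)| :=
        abs_sum_le_sum_abs _ _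
    _ ≤ ∑ i ∈ range (f.natDegree + 1), X * T ^ f.natDegree := sum_le_sum fun i hi => by
        push_cast
        rw [abs_mul, abs_pow]
        exact mul_le_mul (hcoeff i) ((pow_le_pow_left₀ (abs_nonneg _) ht i).trans
          (pow_le_pow_right₀ hT (mem_range_succ_iff.mp hi))) (by positivity) hX
    _ = (f.natDegree + 1) * X * T ^ f.natDegree := by
        rw [sum_const, card_range, nsmul_eq_mul]
        push_cast
        ring

theorem abs_eval_sub_eval_le {f : ℤ[X]} (hf : 0 < f.natDegree) {X : ℝ} (hX : 1 ≤ X)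
    (hcoeff : ∀ i, |(f.coeff i : ℝ)| ≤ X) {H x z : ℤ} (hx : x ∈ Icc 1 H) (hz : z ∈ Icc 1 H) :
    |((f.eval x - f.eval z : ℤ) : ℝ)| ≤ 2 * (f.natDegree + 1) * (H * X) ^ f.natDegree := by
  have key : ∀ t ∈ Icc 1 H,
      |((f.eval t : ℤ) : ℝ)| ≤ (f.natDegree + 1) * (H * X) ^ f.natDegree := by
    intro t ht
    obtain ⟨ht₁, htH⟩ := mem_Icc.mp ht
    have ht₀ : (0 : ℝ) ≤ t := by exact_mod_cast (zero_le_one.trans ht₁)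
    calc _ ≤ (f.natDegree + 1) * X * (H : ℝ) ^ f.natDegree :=
          abs_eval_le_of_abs_coeff_le hcoeff (by exact_mod_cast ht₁.trans htH)
            (by rw [abs_of_nonneg ht₀]; exact_mod_cast htH)
      _ ≤ (f.natDegree + 1) * X ^ f.natDegree * (H : ℝ) ^ f.natDegree := by
          have := le_self_pow₀ hX hf.ne'
          have : (0 : ℝ) ≤ H := ht₀.trans (by exact_mod_cast htH)
          gcongr
      _ = _ := by ring
  push_cast
  calc _ ≤ |((f.eval x : ℤ) : ℝ)| + |((f.eval z : ℤ) : ℝ)| := abs_sub _ _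
    _ ≤ _ := by linarith [key x hx, key z hz]

lemma rpow_div_le_of_le_mul_pow {m c y ε : ℝ} {d : ℕ} (hd : d ≠ 0) (hm : 0 ≤ m) (hc : 0 ≤ c)
    (hy : 0 ≤ y) (hε : 0 ≤ ε) (h : m ≤ c * y ^ d) : m ^ (ε / d) ≤ c ^ (ε / d) * y ^ ε :=
  calc m ^ (ε / d) ≤ (c * y ^ d) ^ (ε / d) := Real.rpow_le_rpow hm h (by positivity)
    _ = c ^ (ε / d) * y ^ ε := by
        rw [Real.mul_rpow hc (by positivity), ← Real.rpow_natCast, ← Real.rpow_mul hy,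
          mul_div_cancel₀ _ (Nat.cast_ne_zero.mpr hd)]

theorem card_diffReps_Icc_le {f : ℤ[X]} (hf : 2 ≤ f.natDegree) {X ε C₁ : ℝ} (hX : 1 ≤ X)
    (hε : 0 ≤ ε) (hC₁ : 0 ≤ C₁) (hcoeff : ∀ i, |(f.coeff i : ℝ)| ≤ X)
    (hτ : ∀ n : ℕ, n ≠ 0 → (#n.divisors : ℝ) ≤ C₁ * n ^ (ε / f.natDegree)) {H M : ℤ}
    (hM : M ∈ (Icc 1 H ×ˢ Icc 1 H).image (fun p => f.eval p.1 - f.eval p.2)) (hM₀ : M ≠ 0) :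
    (#(diffReps f (Icc 1 H) M) : ℝ) ≤
      2 * f.natDegree * C₁ * (2 * (f.natDegree + 1)) ^ (ε / f.natDegree) * (H * X) ^ ε := by
  obtain ⟨⟨x, z⟩, hxz, rfl⟩ := mem_image.mp hM
  obtain ⟨hx, hz⟩ := mem_product.mp hxz
  have hsize : ((f.eval x - f.eval z).natAbs : ℝ) ≤
      2 * (f.natDegree + 1) * (H * X) ^ f.natDegree := by
    rw [Nat.cast_natAbs, Int.cast_abs]
    exact abs_eval_sub_eval_le (by omega) hX hcoeff hx hz
  have hH : (0 : ℝ) ≤ H := by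
    have := mem_Icc.mp hx
    exact_mod_cast (by omega : (0 : ℤ) ≤ H)
  calc (#(diffReps f (Icc 1 H) _) : ℝ)
      ≤ f.natDegree * (2 * #(f.eval x - f.eval z).natAbs.divisors) := by
        exact_mod_cast card_diffReps_le_of_ne_zero hf _ hM₀
    _ ≤ f.natDegree * (2 * (C₁ * ((f.eval x - f.eval z).natAbs : ℝ) ^ (ε / f.natDegree))) := by
        gcongr
        exact hτ _ (Int.natAbs_ne_zero.mpr hM₀)
    _ ≤ f.natDegree *
          (2 * (C₁ * ((2 * (f.natDegree + 1)) ^ (ε / f.natDegree) * (H * X) ^ ε))) := by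
        gcongr
        exact rpow_div_le_of_le_mul_pow (by omega) (by positivity) (by positivity)
          (by positivity) hε hsize
    _ = _ := by ring

theorem stmt_9 (d : ℕ) (hd : 2 ≤ d) (ε : ℝ) (hε : 0 < ε) :
    ∃ C : ℝ, 0 < C ∧ ∀ X : ℝ, 1 ≤ X → ∀ f : Polynomial ℤ, f.natDegree = d →
      (∀ i, (|f.coeff i| : ℝ) ≤ X) → ∀ H : ℤ, 1 ≤ H →
      ((((Finset.Icc 1 H) ×ˢ (Finset.Icc 1 H) ×ˢ (Finset.Icc 1 H) ×ˢ (Finset.Icc 1 H)).filter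
          fun q : ℤ × ℤ × ℤ × ℤ =>
            f.eval q.1 + f.eval q.2.1 = f.eval q.2.2.1 + f.eval q.2.2.2).card : ℝ)
        ≤ C * (H : ℝ) ^ 2 * ((H : ℝ) * X) ^ ε := by
  obtain ⟨C₁, hC₁, hτ⟩ := Nat.exists_card_divisors_le_rpow (δ := ε / d) (by positivity)
  set A : ℝ := 2 * d * C₁ * (2 * (d + 1)) ^ (ε / d)
  refine ⟨d ^ 2 + A, by positivity, fun X hX f hf hcoeff H hH => ?_⟩
  subst hf
  have hIcc : (#(Icc 1 H) : ℝ) = H := by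
    rw [Int.card_Icc, add_sub_cancel_right]
    exact_mod_cast Int.toNat_of_nonneg (by omega : 0 ≤ H)
  have hHXε : 1 ≤ ((H : ℝ) * X) ^ ε :=
    Real.one_le_rpow (one_le_mul_of_one_le_of_one_le (by exact_mod_cast hH) hX) hε.le
  calc _ ≤ (f.natDegree ^ 2 + A * (H * X) ^ ε) * (#(Icc 1 H) : ℝ) ^ 2 :=
        card_eval_add_eq_le (by omega) _ (by positivity) fun M hM hM₀ =>
          card_diffReps_Icc_le hd hX hε.le hC₁.le hcoeff hτ hM hM₀
    _ ≤ (f.natDegree ^ 2 * (H * X) ^ ε + A * (H * X) ^ ε) * (H : ℝ) ^ 2 := by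
        rw [hIcc]
        gcongr
        exact le_mul_of_one_le_right (by positivity) hHXε
    _ = (f.natDegree ^ 2 + A) * (H : ℝ) ^ 2 * ((H : ℝ) * X) ^ ε := by ring
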